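/- Let A, B be n-by-n complex matrices. Then there exist 2n-by-n isometry matrices U and V such that |A+B|^2 ⊕ |A-B|^2 = U(|A|^2 + |B|^2)U* + V(|A|^2 + |B|^2)V*. -/

import Mathlib

open Matrix

variable {m : Type*} [Fintype m] [DecidableEq m]

lemma toEuclideanLin_mul (X Y : Matrix m m ℂ) :
    Matrix.toEuclideanLin (X * Y) =
      (Matrix.toEuclideanLin X).comp (Matrix.toEuclideanLin Y) := by
  refine LinearMap.ext fun v => ?_
  simp [Matrix.toEuclideanLin_apply, Matrix.mulVec_mulVec]

lemma toEuclideanLin_one : Matrix.toEuclideanLin (1 : Matrix m m ℂ) = LinearMap.id := by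
  refine LinearMap.ext fun v => ?_
  simp [Matrix.toEuclideanLin_apply]

lemma exists_unitary_mul_eq (X Y : Matrix m m ℂ) (h : Xᴴ * X = Yᴴ * Y) :
    ∃ W : Matrix m m ℂ, Wᴴ * W = 1 ∧ W * X = Y := by
  set f := Matrix.toEuclideanLin X with hf
  set g := Matrix.toEuclideanLin Y with hg
  have hadj : (LinearMap.adjoint f).comp f = (LinearMap.adjoint g).comp g := by
    rw [hf, hg, ← Matrix.toEuclideanLin_conjTranspose_eq_adjoint,
      ← Matrix.toEuclideanLin_conjTranspose_eq_adjoint, ← toEuclideanLin_mul,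
      ← toEuclideanLin_mul, h]
  have hnorm : ∀ v, ‖f v‖ = ‖g v‖ := by
    intro v
    have h1 : (inner ℂ (f v) (f v) : ℂ) = inner ℂ (g v) (g v) := by
      rw [← LinearMap.adjoint_inner_left f, ← LinearMap.adjoint_inner_left g]
      have := congrArg (fun T : _ →ₗ[ℂ] _ => (inner ℂ (T v) v : ℂ)) hadj
      simpa using this
    rw [norm_eq_sqrt_re_inner (𝕜 := ℂ), norm_eq_sqrt_re_inner (𝕜 := ℂ), h1]
  have hker : LinearMap.ker f = LinearMap.ker g := by
    ext v
    simp only [LinearMap.mem_ker]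
    constructor
    · intro hv
      have := hnorm v
      rw [hv, norm_zero] at this
      exact norm_eq_zero.mp this.symm
    · intro hv
      have := hnorm v
      rw [hv, norm_zero] at this
      exact norm_eq_zero.mp this
  let e : LinearMap.range f ≃ₗ[ℂ] LinearMap.range g :=
    (LinearMap.quotKerEquivRange f).symm ≪≫ₗ Submodule.quotEquivOfEq _ _ hker ≪≫ₗ
      LinearMap.quotKerEquivRange g
  have he : ∀ v, (e ⟨f v, LinearMap.mem_range_self f v⟩ : EuclideanSpace ℂ m) = g v := by
    intro v
    simp only [e, LinearEquiv.trans_apply]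
    rw [LinearMap.quotKerEquivRange_symm_apply_image, Submodule.mkQ_apply,
      Submodule.quotEquivOfEq_mk, LinearMap.quotKerEquivRange_apply_mk]
  let φ : LinearMap.range f →ₗᵢ[ℂ] EuclideanSpace ℂ m :=
    { toLinearMap := (LinearMap.range g).subtype ∘ₗ e.toLinearMap
      norm_map' := by
        rintro ⟨x, v, rfl⟩
        simp only [LinearMap.coe_comp, Function.comp_apply, Submodule.coe_subtype,
          LinearEquiv.coe_coe]
        rw [he v]
        simpa [Submodule.norm_coe] using (hnorm v).symm }
  let u := φ.extend
  have hu : ∀ v, u (f v) = g v := by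
    intro v
    have := φ.extend_apply ⟨f v, LinearMap.mem_range_self f v⟩
    rw [this]
    show ((LinearMap.range g).subtype ∘ₗ e.toLinearMap) _ = _
    simp only [LinearMap.coe_comp, Function.comp_apply, Submodule.coe_subtype,
      LinearEquiv.coe_coe]
    exact he v
  refine ⟨Matrix.toEuclideanLin.symm u.toLinearMap, ?_, ?_⟩
  · apply Matrix.toEuclideanLin.injective
    rw [toEuclideanLin_mul, Matrix.toEuclideanLin_conjTranspose_eq_adjoint, toEuclideanLin_one]
    simp only [LinearEquiv.apply_symm_apply]
    refine LinearMap.ext fun x => ?_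
    refine ext_inner_right ℂ fun y => ?_
    rw [LinearMap.comp_apply, LinearMap.adjoint_inner_left]
    show (inner ℂ (u x) (u y) : ℂ) = _
    rw [u.inner_map_map]
    simp
  · apply Matrix.toEuclideanLin.injective
    rw [toEuclideanLin_mul]
    simp only [LinearEquiv.apply_symm_apply]
    refine LinearMap.ext fun v => ?_
    exact hu v


open Matrix
open scoped ComplexOrder
open scoped MatrixOrder

lemma rect_polar {n : ℕ} (G : Matrix (Fin n ⊕ Fin n) (Fin n) ℂ) :
    ∃ U : Matrix (Fin n ⊕ Fin n) (Fin n) ℂ,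
      Uᴴ * U = 1 ∧ U * (Gᴴ * G) * Uᴴ = G * Gᴴ := by
  have hM : (Gᴴ * G).PosSemidef := posSemidef_conjTranspose_mul_self G
  set S := CFC.sqrt (Gᴴ * G) with hS
  have hSS : S * S = Gᴴ * G := CFC.sqrt_mul_sqrt_self _ hM.nonneg
  have hSH : Sᴴ = S := (CFC.sqrt_nonneg _).posSemidef.1
  set E : Matrix (Fin n ⊕ Fin n) (Fin n) ℂ := fromRows 1 0 with hEdef
  have hE : Eᴴ * E = 1 := by
    rw [hEdef, conjTranspose_fromRows_eq_fromCols_conjTranspose, fromCols_mul_fromRows]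
    simp
  have hE' : ∀ (Z : Matrix (Fin n) (Fin n ⊕ Fin n) ℂ), Eᴴ * (E * Z) = Z := fun Z => by
    rw [← Matrix.mul_assoc, hE, Matrix.one_mul]
  have hSS' : ∀ (Z : Matrix (Fin n) (Fin n ⊕ Fin n) ℂ), S * (S * Z) = Gᴴ * (G * Z) := fun Z => by
    rw [← Matrix.mul_assoc, hSS, Matrix.mul_assoc]
  obtain ⟨W, hW1, hW2⟩ := exists_unitary_mul_eq (E * S * Eᴴ) (G * Eᴴ) (by
    simp only [conjTranspose_mul, conjTranspose_conjTranspose, hSH, Matrix.mul_assoc, hE', hSS'])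
  have h3 : W * E * S = G := by
    have h4 := congrArg (fun Z => Z * E) hW2
    simp only [Matrix.mul_assoc, hE, Matrix.mul_one] at h4
    rwa [Matrix.mul_assoc]
  refine ⟨W * E, ?_, ?_⟩
  · rw [conjTranspose_mul, Matrix.mul_assoc, ← Matrix.mul_assoc Wᴴ W E, hW1,
      Matrix.one_mul, hE]
  · rw [← hSS, ← h3]
    simp only [conjTranspose_mul, hSH, Matrix.mul_assoc]

/-- **Theorem 3.1 (a new operator parallelogram law).** For `n`-by-`n` complex matrices
`A, B` there exist `2n`-by-`n` isometries `U, V` with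
`|A+B|² ⊕ |A-B|² = U(|A|²+|B|²)U* + V(|A|²+|B|²)V*`, where `|X|² = XᴴX` and `⊕` is the
block diagonal direct sum. -/
theorem parallelogram_law_isometries {n : ℕ} (A B : Matrix (Fin n) (Fin n) ℂ) :
    ∃ U V : Matrix (Fin n ⊕ Fin n) (Fin n) ℂ,
      Uᴴ * U = 1 ∧ Vᴴ * V = 1 ∧
      Matrix.fromBlocks ((A + B)ᴴ * (A + B)) 0 0 ((A - B)ᴴ * (A - B))
        = U * (Aᴴ * A + Bᴴ * B) * Uᴴ + V * (Aᴴ * A + Bᴴ * B) * Vᴴ := by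
  have h1 : ((A + B)ᴴ * (A + B)).PosSemidef := posSemidef_conjTranspose_mul_self _
  have h2 : ((A - B)ᴴ * (A - B)).PosSemidef := posSemidef_conjTranspose_mul_self _
  set S₁ := CFC.sqrt ((A + B)ᴴ * (A + B)) with hS₁
  set S₂ := CFC.sqrt ((A - B)ᴴ * (A - B)) with hS₂
  have hS₁S₁ : S₁ * S₁ = (A + B)ᴴ * (A + B) := CFC.sqrt_mul_sqrt_self _ h1.nonneg
  have hS₂S₂ : S₂ * S₂ = (A - B)ᴴ * (A - B) := CFC.sqrt_mul_sqrt_self _ h2.nonneg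
  have hS₁H : S₁ᴴ = S₁ := (CFC.sqrt_nonneg _).posSemidef.1
  have hS₂H : S₂ᴴ = S₂ := (CFC.sqrt_nonneg _).posSemidef.1
  set M := Aᴴ * A + Bᴴ * B with hMdef
  have hpar : (A + B)ᴴ * (A + B) + (A - B)ᴴ * (A - B) = M + M := by
    rw [hMdef]
    simp only [conjTranspose_add, conjTranspose_sub]
    noncomm_ring
  set G := fromRows S₁ S₂ with hG
  set G' := fromRows S₁ (-S₂) with hG'
  have hGH : Gᴴ = fromCols S₁ S₂ := by
    rw [hG, conjTranspose_fromRows_eq_fromCols_conjTranspose, hS₁H, hS₂H]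
  have hG'H : G'ᴴ = fromCols S₁ (-S₂) := by
    rw [hG', conjTranspose_fromRows_eq_fromCols_conjTranspose, hS₁H, conjTranspose_neg, hS₂H]
  have hGG : Gᴴ * G = M + M := by
    rw [hGH, hG, fromCols_mul_fromRows, hS₁S₁, hS₂S₂, hpar]
  have hG'G' : G'ᴴ * G' = M + M := by
    rw [hG'H, hG', fromCols_mul_fromRows, neg_mul_neg, hS₁S₁, hS₂S₂, hpar]
  obtain ⟨U, hU1, hU2⟩ := rect_polar G
  obtain ⟨V, hV1, hV2⟩ := rect_polar G'
  refine ⟨U, V, hU1, hV1, ?_⟩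
  have hsum : G * Gᴴ + G' * G'ᴴ =
      fromBlocks ((A + B)ᴴ * (A + B)) 0 0 ((A - B)ᴴ * (A - B))
        + fromBlocks ((A + B)ᴴ * (A + B)) 0 0 ((A - B)ᴴ * (A - B)) := by
    rw [hG, hG', hGH, hG'H, fromRows_mul_fromCols, fromRows_mul_fromCols]
    simp only [Matrix.fromBlocks_add, mul_neg, neg_mul, neg_neg, add_neg_cancel, add_zero, zero_add, hS₁S₁, hS₂S₂]
  have key : (2 : ℂ) • fromBlocks ((A + B)ᴴ * (A + B)) 0 0 ((A - B)ᴴ * (A - B))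
      = (2 : ℂ) • (U * M * Uᴴ + V * M * Vᴴ) := by
    rw [two_smul, two_smul, ← hsum, ← hU2, ← hV2, hGG, hG'G']
    simp only [Matrix.mul_add, Matrix.add_mul]
    abel
  exact smul_right_injective _ (two_ne_zero : (2 : ℂ) ≠ 0) key
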